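/- If n is even and T is an (A,n)-symmetric operator (S_A^n(T) = 0), then T is (A,n−1)-symmetric (S_A^{n−1}(T) = 0). -/

import Mathlib

open ContinuousLinearMap

noncomputable def SOp {H : Type*} [NormedAddCommGroup H] [InnerProductSpace ℂ H]
    [CompleteSpace H] (A T : H →L[ℂ] H) (n : ℕ) : H →L[ℂ] H :=
  ∑ k ∈ Finset.range (n + 1),
    ((-1 : ℂ) ^ (n - k) * (n.choose k : ℂ)) • (((adjoint T) ^ k) ∘L A ∘L (T ^ (n - k)))

/-!
Write `δ_T X = T† X - X T` (`deltaOp T`). The binomial theorem for the commuting left and right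
multiplications gives `S_A^m(T) = δ_T^m A`, and for real `t`, `E_t = exp (i t T)` satisfies
`E_t† A E_t = exp (-i t δ_T) A`. Since `δ_T^n A = 0`, this is a polynomial in `t` of degree at
most `n - 1` whose coefficient of `t^(n-1)` is `(-i)^(n-1) / (n-1)! • δ_T^(n-1) A`. As `A ≥ 0`,
each quadratic form `t ↦ ⟪x, E_t† A E_t x⟫` is a nonnegative polynomial of odd degree `n - 1`,
so its top coefficient vanishes; by polarization, `δ_T^(n-1) A = 0`.
-/

open NormedSpace Filter Finset
open Complex (I)
open scoped InnerProductSpace Topology Nat ComplexOrder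

theorem Real.eq_zero_of_odd_of_forall_sum_mul_pow_nonneg (b : ℕ → ℝ) {p : ℕ} (hp : Odd p)
    (h : ∀ t : ℝ, 0 ≤ ∑ r ∈ range (p + 1), b r * t ^ r) : b p = 0 := by
  -- `g t⁻¹` is the polynomial over `t ^ p`, and `t ^ p` has opposite signs at `±∞`
  set g : ℝ → ℝ := fun s => ∑ r ∈ range (p + 1), b r * s ^ (p - r)
  have hg : Tendsto g (𝓝 0) (𝓝 (b p)) := by
    have hg0 : g 0 = b p := by
      simp only [g]
      rw [sum_range_succ, Nat.sub_self, pow_zero, mul_one, add_eq_right]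
      exact sum_eq_zero fun r hr => by
        rw [zero_pow (Nat.sub_ne_zero_of_lt (mem_range.mp hr)), mul_zero]
    exact hg0 ▸ (by fun_prop : Continuous g).tendsto 0
  have hscale (t : ℝ) (ht : t ≠ 0) : ∑ r ∈ range (p + 1), b r * t ^ r = t ^ p * g t⁻¹ := by
    rw [mul_sum]
    refine sum_congr rfl fun r hr => ?_
    rw [inv_pow, pow_sub₀ t ht (Nat.le_of_lt_succ (mem_range.mp hr))]
    field_simp
  have hTop : 0 ≤ b p := by
    refine ge_of_tendsto (hg.comp tendsto_inv_atTop_zero) ?_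
    filter_upwards [eventually_gt_atTop 0] with t ht
    exact nonneg_of_mul_nonneg_right (hscale t ht.ne' ▸ h t) (pow_pos ht p)
  have hBot : b p ≤ 0 := by
    refine le_of_tendsto (hg.comp tendsto_inv_atBot_zero) ?_
    filter_upwards [eventually_lt_atBot 0] with t ht
    exact nonpos_of_mul_nonneg_right (hscale t ht.ne ▸ h t) (hp.pow_neg ht)
  exact le_antisymm hBot hTop

theorem Complex.eq_zero_of_odd_of_forall_sum_mul_pow_nonneg (c : ℕ → ℂ) {p : ℕ} (hp : Odd p)
    (h : ∀ t : ℝ, 0 ≤ ∑ r ∈ range (p + 1), c r * t ^ r) : c p = 0 := by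
  have hre (t : ℝ) : (∑ r ∈ range (p + 1), c r * t ^ r).re
      = ∑ r ∈ range (p + 1), (c r).re * t ^ r := by
    simp [Complex.re_sum, ← Complex.ofReal_pow]
  have him (t : ℝ) : (∑ r ∈ range (p + 1), c r * t ^ r).im
      = ∑ r ∈ range (p + 1), (c r).im * t ^ r := by
    simp [Complex.im_sum, ← Complex.ofReal_pow]
  refine Complex.ext ?_ ?_
  · exact Real.eq_zero_of_odd_of_forall_sum_mul_pow_nonneg (fun r => (c r).re) hp
      fun t => hre t ▸ (Complex.nonneg_iff.mp (h t)).1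
  · exact Real.eq_zero_of_odd_of_forall_sum_mul_pow_nonneg (fun r => (c r).im) hp
      fun t => (him t ▸ (Complex.nonneg_iff.mp (h t)).2).le

namespace ContinuousLinearMap

variable {𝕂 E 𝔸 : Type*} [RCLike 𝕂] [NormedAddCommGroup E] [NormedSpace 𝕂 E] [CompleteSpace E]
  [NormedRing 𝔸] [NormedAlgebra 𝕂 𝔸]

theorem exp_apply_eq_of_pow_apply [CompleteSpace 𝔸] {M : E →L[𝕂] E} {a : 𝔸} (f : 𝔸 →L[𝕂] E)
    {x : E} (h : ∀ n, (M ^ n) x = f (a ^ n)) : exp M x = f (exp a) := by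
  have hM := (exp_series_hasSum_exp' (𝕂 := 𝕂) M).mapL (apply 𝕂 E x)
  simp only [apply_apply, smul_apply, h, ← map_smul] at hM
  exact hM.unique ((exp_series_hasSum_exp' a).mapL f)

theorem exp_apply_eq_sum_of_pow_apply_eq_zero {M : E →L[𝕂] E} {x : E} {n : ℕ}
    (h : (M ^ n) x = 0) : exp M x = ∑ r ∈ range n, (r ! : 𝕂)⁻¹ • (M ^ r) x := by
  have hM := (exp_series_hasSum_exp' (𝕂 := 𝕂) M).mapL (apply 𝕂 E x)
  refine hM.unique (hasSum_sum_of_ne_finset_zero fun r hr => ?_)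
  rw [apply_apply, smul_apply, ← Nat.sub_add_cancel (not_lt.mp (mt mem_range.mpr hr)), pow_add,
    mul_apply_eq_comp, h, map_zero, smul_zero]

theorem pow_mul_left (a : 𝔸) (n : ℕ) : mul 𝕂 𝔸 a ^ n = mul 𝕂 𝔸 (a ^ n) := by
  induction n with
  | zero => ext; simp
  | succ n ih => ext; simp [pow_succ, ih, mul_assoc]

theorem pow_mul_flip (b : 𝔸) (n : ℕ) : (mul 𝕂 𝔸).flip b ^ n = (mul 𝕂 𝔸).flip (b ^ n) := by
  induction n with
  | zero => ext; simp
  | succ n ih => ext; simp [pow_succ, ih, mul_assoc, pow_mul_comm']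

theorem commute_mul_mul_flip (a b : 𝔸) : Commute (mul 𝕂 𝔸 a) ((mul 𝕂 𝔸).flip b) := by
  ext; simp [mul_assoc]

theorem exp_mul_apply [CompleteSpace 𝔸] (a x : 𝔸) : exp (mul 𝕂 𝔸 a) x = exp a * x :=
  exp_apply_eq_of_pow_apply ((mul 𝕂 𝔸).flip x) fun n => by rw [pow_mul_left]; rfl

theorem exp_flip_mul_apply [CompleteSpace 𝔸] (b x : 𝔸) :
    exp ((mul 𝕂 𝔸).flip b) x = x * exp b :=
  exp_apply_eq_of_pow_apply (mul 𝕂 𝔸 x) fun n => by rw [pow_mul_flip]; rfl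

theorem exp_mul_mul_exp [CompleteSpace 𝔸] (a b x : 𝔸) :
    exp a * x * exp b = exp (mul 𝕂 𝔸 a + (mul 𝕂 𝔸).flip b) x := by
  let _ : NormedAlgebra ℚ (𝔸 →L[𝕂] 𝔸) := .restrictScalars ℚ 𝕂 _
  rw [exp_add_of_commute (commute_mul_mul_flip a b), mul_apply_eq_comp, exp_flip_mul_apply,
    exp_mul_apply, mul_assoc]

end ContinuousLinearMap

section Hilbert

variable {H : Type*} [NormedAddCommGroup H] [InnerProductSpace ℂ H] [CompleteSpace H]

noncomputable def deltaOp (T : H →L[ℂ] H) : (H →L[ℂ] H) →L[ℂ] (H →L[ℂ] H) :=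
  mul ℂ _ (adjoint T) - (mul ℂ _).flip T

theorem SOp_eq_deltaOp_pow_apply (A T : H →L[ℂ] H) (m : ℕ) :
    SOp A T m = (deltaOp T ^ m) A := by
  have hc := (commute_mul_mul_flip (𝕂 := ℂ) (adjoint T) T).smul_right (-1 : ℂ)
  rw [deltaOp, sub_eq_add_neg, ← neg_one_smul ℂ ((mul ℂ _).flip T), hc.add_pow, _root_.sum_apply, SOp]
  refine sum_congr rfl fun k _ => ?_
  simp only [smul_pow, pow_mul_left, pow_mul_flip, mul_apply_eq_comp, _root_.natCast_apply,
    smul_apply, map_smul, mul_apply', flip_apply, ← Nat.cast_smul_eq_nsmul ℂ, smul_smul]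
  rw [mul_comm]
  rfl

theorem star_exp_mul_mul_exp (A T : H →L[ℂ] H) (t : ℝ) :
    star (exp ((I * t) • T)) * A * exp ((I * t) • T) = exp ((-(I * t)) • deltaOp T) A := by
  rw [star_exp, star_smul, star_eq_adjoint, exp_mul_mul_exp (𝕂 := ℂ)]
  congr 2
  ext X : 1
  simp [deltaOp, sub_eq_add_neg]

theorem inner_star_exp_mul_mul_exp_apply {A T : H →L[ℂ] H} {n : ℕ} (h : (deltaOp T ^ n) A = 0)
    (x : H) (t : ℝ) :
    ⟪x, (star (exp ((I * t) • T)) * A * exp ((I * t) • T)) x⟫_ℂ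
      = ∑ r ∈ range n, ((r ! : ℂ)⁻¹ * (-I) ^ r * ⟪x, (deltaOp T ^ r) A x⟫_ℂ) * t ^ r := by
  rw [star_exp_mul_mul_exp, exp_apply_eq_sum_of_pow_apply_eq_zero (𝕂 := ℂ) (n := n)]
  · rw [_root_.sum_apply, inner_sum]
    refine sum_congr rfl fun r _ => ?_
    simp only [smul_pow, smul_apply, inner_smul_right]
    ring
  · rw [smul_pow, smul_apply, h, smul_zero]

end Hilbert

theorem symmetric_reduce_n {H : Type*} [NormedAddCommGroup H] [InnerProductSpace ℂ H]
    [CompleteSpace H] (A T : H →L[ℂ] H) (hA : A.IsPositive) (n : ℕ)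
    (hn_even : Even n) (hn : 2 ≤ n) (h : SOp A T n = 0) : SOp A T (n - 1) = 0 := by
  obtain ⟨p, rfl⟩ : ∃ p, n = p + 1 := ⟨n - 1, by omega⟩
  have hp : Odd p := by simpa [Nat.even_add_one] using hn_even
  rw [SOp_eq_deltaOp_pow_apply] at h
  rw [Nat.add_sub_cancel, SOp_eq_deltaOp_pow_apply]
  refine coe_injective ((inner_map_self_eq_zero _).mp fun x => inner_eq_zero_symm.mp ?_)
  have hcoeff := Complex.eq_zero_of_odd_of_forall_sum_mul_pow_nonneg _ hp fun t =>
    inner_star_exp_mul_mul_exp_apply h x t ▸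
      (hA.adjoint_conj (exp ((I * t) • T))).inner_nonneg_right x
  simpa [Nat.factorial_ne_zero, Complex.I_ne_zero] using hcoeff
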